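/- arXiv:2210.15260 — 2 statements merged into one kernel-verified Lean document; each statement's English description precedes it below -/
import Mathlib

section
/- The operator Z acts bidiagonally on the Pastro polynomial basis: for every positive integer n and all real x ≠ 0, (1 - q x^{-1}) P_n(q^{-1}x; a, b; q) + (q x^{-1} - b) P_n(x; a, b; q) = q^{-n} (1 - b q^n) P_n(x; a, b; q) + [ b q (1 - q^{-n})(1 - a q^{n-1}) / ( a (1 - b q^{n-1}) ) ] P_{n-1}(x; a, b; q). -/
/-- The q-Pochhammer symbol `(z;q)_k = ∏_{j=0}^{k-1} (1 - z q^j)`. -/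
noncomputable def qPoch (q z : ℝ) (k : ℕ) : ℝ :=
  ∏ j ∈ Finset.range k, (1 - z * q ^ j)

/-- Coefficient `c_{n,k}` of the monic Pastro polynomial. -/
noncomputable def pastroCoeff (q a b : ℝ) (n k : ℕ) : ℝ :=
  (qPoch q (a⁻¹ * b * q ^ (1 - (n : ℤ))) n * qPoch q q n /
      (qPoch q (q ^ (-(n : ℤ))) n * qPoch q b n)) *
    (qPoch q (q ^ (-(n : ℤ))) k * qPoch q b k /
      (qPoch q (a⁻¹ * b * q ^ (1 - (n : ℤ))) k * qPoch q q k))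

/-- The monic Pastro polynomial `P_n(x;a,b;q)`. -/
noncomputable def pastroP (q a b : ℝ) (n : ℕ) (x : ℝ) : ℝ :=
  ∑ k ∈ Finset.range (n + 1), pastroCoeff q a b n k * x ^ k

/-!
Expanding in monomials, `Z` sends `x^k` to `(q^{-k} - b) x^k + (q - q^{1-k}) x^{k-1}`, so the
claim is a three-term identity between the coefficients `c_{n,k}`, `c_{n,k+1}` and `c_{n-1,k}`.
Both `c_{n,k+1}` and `c_{n-1,k}` are `c_{n,k}` times an explicit rational factor: the first by
the recursion of the q-Pochhammer symbols, the second because passing from `n` to `n - 1`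
multiplies both lower parameters `q^{-n}` and `a⁻¹ b q^{1-n}` by `q`. What is left is an
identity of rational functions in `q`, `q^k`, `q^n`, `a` and `b`.
-/

open Finset

section qPochhammer

variable (q : ℝ)

lemma qPoch_succ (z : ℝ) (k : ℕ) : qPoch q z (k + 1) = qPoch q z k * (1 - z * q ^ k) :=
  prod_range_succ _ _

lemma qPoch_succ_eq_one_sub_mul (z : ℝ) (k : ℕ) :
    qPoch q z (k + 1) = (1 - z) * qPoch q (z * q) k := by
  simp only [qPoch, prod_range_succ', pow_zero, mul_one, pow_succ, mul_comm (1 - z)]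
  congr 1
  exact prod_congr rfl fun j _ => by ring

variable {q} in
lemma qPoch_mul_q {z : ℝ} (hz : 1 - z ≠ 0) (k : ℕ) :
    qPoch q (z * q) k = qPoch q z k * (1 - z * q ^ k) / (1 - z) := by
  rw [eq_div_iff hz, ← qPoch_succ, qPoch_succ_eq_one_sub_mul, mul_comm]

/-- With `z = q^{-n}` and `w = a⁻¹ b q^{1-n}` this is the `k`-dependent factor of `c_{n,k}`. -/
noncomputable def pastroTerm (b z w : ℝ) (k : ℕ) : ℝ :=
  qPoch q z k * qPoch q b k / (qPoch q w k * qPoch q q k)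

variable (b z w : ℝ)

lemma pastroTerm_succ (k : ℕ) :
    pastroTerm q b z w (k + 1) = pastroTerm q b z w k *
      ((1 - z * q ^ k) * (1 - b * q ^ k) / ((1 - w * q ^ k) * (1 - q * q ^ k))) := by
  simp only [pastroTerm, qPoch_succ, div_eq_mul_inv, mul_inv]
  ring

variable {b z w}

lemma pastroTerm_mul_q (hz : 1 - z ≠ 0) (hw : 1 - w ≠ 0) (k : ℕ) :
    pastroTerm q b (z * q) (w * q) k = pastroTerm q b z w k *
      ((1 - z * q ^ k) / (1 - w * q ^ k) * ((1 - w) / (1 - z))) := by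
  simp only [pastroTerm, qPoch_mul_q hz, qPoch_mul_q hw, div_eq_mul_inv, mul_inv, inv_inv]
  ring

lemma inv_pastroTerm_mul_q_mul (hz : 1 - z ≠ 0) (hw : 1 - w ≠ 0) {n : ℕ}
    (hbn : 1 - b * q ^ n ≠ 0) (hqn : 1 - q * q ^ n ≠ 0) (k : ℕ) :
    (pastroTerm q b (z * q) (w * q) n)⁻¹ * pastroTerm q b (z * q) (w * q) k =
      (pastroTerm q b z w (n + 1))⁻¹ * pastroTerm q b z w k *
        ((1 - z * q ^ k) / (1 - w * q ^ k) * ((1 - b * q ^ n) / (1 - q * q ^ n))) := by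
  have hscalar : ((1 - z * q ^ n) / (1 - w * q ^ n) * ((1 - w) / (1 - z)))⁻¹ * ((1 - w) / (1 - z)) =
      ((1 - z * q ^ n) * (1 - b * q ^ n) / ((1 - w * q ^ n) * (1 - q * q ^ n)))⁻¹ *
        ((1 - b * q ^ n) / (1 - q * q ^ n)) := by
    rw [mul_inv, inv_mul_cancel_right₀ (div_ne_zero hw hz), ← div_mul_div_comm, mul_inv,
      inv_mul_cancel_right₀ (div_ne_zero hbn hqn)]
  rw [pastroTerm_mul_q q hz hw, pastroTerm_mul_q q hz hw, pastroTerm_succ]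
  simp only [div_eq_mul_inv, mul_inv, inv_inv] at hscalar ⊢
  linear_combination (pastroTerm q b z w n)⁻¹ * pastroTerm q b z w k * (1 - z * q ^ k) *
    (1 - w * q ^ k)⁻¹ * hscalar

end qPochhammer

lemma pastroCoeff_eq_pastroTerm (q a b : ℝ) (n k : ℕ) :
    pastroCoeff q a b n k =
      (pastroTerm q b (q ^ (-(n : ℤ))) (a⁻¹ * b * q ^ (1 - (n : ℤ))) n)⁻¹ *
        pastroTerm q b (q ^ (-(n : ℤ))) (a⁻¹ * b * q ^ (1 - (n : ℤ))) k := by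
  rw [pastroTerm, inv_div]
  rfl

lemma pastroCoeff_succ_right (q a b : ℝ) (n k : ℕ) :
    pastroCoeff q a b n (k + 1) = pastroCoeff q a b n k *
      ((1 - q ^ (-(n : ℤ)) * q ^ k) * (1 - b * q ^ k) /
        ((1 - a⁻¹ * b * q ^ (1 - (n : ℤ)) * q ^ k) * (1 - q * q ^ k))) := by
  rw [pastroCoeff_eq_pastroTerm, pastroTerm_succ, ← mul_assoc, ← pastroCoeff_eq_pastroTerm]

lemma pastroCoeff_eq_pastroCoeff_succ_mul (q a b : ℝ) (hq : q ≠ 0) {m : ℕ}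
    (hz : 1 - q ^ (-((m + 1 : ℕ) : ℤ)) ≠ 0) (hw : 1 - a⁻¹ * b * q ^ (1 - ((m + 1 : ℕ) : ℤ)) ≠ 0)
    (hbm : 1 - b * q ^ m ≠ 0) (hqm : 1 - q * q ^ m ≠ 0) (k : ℕ) :
    pastroCoeff q a b m k = pastroCoeff q a b (m + 1) k *
      ((1 - q ^ (-((m + 1 : ℕ) : ℤ)) * q ^ k) /
          (1 - a⁻¹ * b * q ^ (1 - ((m + 1 : ℕ) : ℤ)) * q ^ k) *
        ((1 - b * q ^ m) / (1 - q * q ^ m))) := by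
  have hzq : q ^ (-(m : ℤ)) = q ^ (-((m + 1 : ℕ) : ℤ)) * q := by
    rw [← zpow_add_one₀ hq]
    push_cast
    ring_nf
  have hwq : a⁻¹ * b * q ^ (1 - (m : ℤ)) = a⁻¹ * b * q ^ (1 - ((m + 1 : ℕ) : ℤ)) * q := by
    rw [mul_assoc (a⁻¹ * b), ← zpow_add_one₀ hq]
    push_cast
    ring_nf
  rw [pastroCoeff_eq_pastroTerm, hzq, hwq, inv_pastroTerm_mul_q_mul q hz hw hbm hqm,
    ← pastroCoeff_eq_pastroTerm]

lemma pastroCoeff_succ_self (q a b : ℝ) (hq : q ≠ 0) (n : ℕ) : pastroCoeff q a b n (n + 1) = 0 := by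
  have hvanish : qPoch q (q ^ (-(n : ℤ))) (n + 1) = 0 := by
    rw [qPoch_succ, zpow_neg, zpow_natCast, inv_mul_cancel₀ (pow_ne_zero n hq), sub_self, mul_zero]
  rw [pastroCoeff, hvanish, zero_mul, zero_div, mul_zero]

lemma pastroP_eq_sum_range_add_two (q a b : ℝ) (hq : q ≠ 0) (n : ℕ) (x : ℝ) :
    pastroP q a b n x = ∑ k ∈ range (n + 2), pastroCoeff q a b n k * x ^ k := by
  rw [sum_range_succ, pastroCoeff_succ_self q a b hq, zero_mul, add_zero, pastroP]

lemma Z_sum_eq (q b x : ℝ) (hq : q ≠ 0) (hx : x ≠ 0) (c : ℕ → ℝ) (n : ℕ) (hc : c (n + 1) = 0) :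
    (1 - q * x⁻¹) * ∑ k ∈ range (n + 1), c k * (q⁻¹ * x) ^ k +
        (q * x⁻¹ - b) * ∑ k ∈ range (n + 1), c k * x ^ k =
      ∑ k ∈ range (n + 1), (((q ^ k)⁻¹ - b) * c k + (q - (q ^ k)⁻¹) * c (k + 1)) * x ^ k := by
  have hshift : ∑ k ∈ range (n + 1), (q - (q ^ k)⁻¹ * q) * c k * x ^ k * x⁻¹ =
      ∑ k ∈ range (n + 1), (q - (q ^ k)⁻¹) * c (k + 1) * x ^ k := by
    rw [sum_range_succ', sum_range_succ, hc, pow_zero, inv_one, one_mul, sub_self]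
    simp only [zero_mul, add_zero, mul_zero]
    refine sum_congr rfl fun k _ => ?_
    field_simp
    ring
  calc _ = ∑ k ∈ range (n + 1), (((q ^ k)⁻¹ - b) * c k * x ^ k +
          (q - (q ^ k)⁻¹ * q) * c k * x ^ k * x⁻¹) := by
        rw [mul_sum, mul_sum, ← sum_add_distrib]
        refine sum_congr rfl fun k _ => ?_
        rw [mul_pow, inv_pow]
        ring
    _ = _ := by
        rw [sum_add_distrib, hshift, ← sum_add_distrib]
        exact sum_congr rfl fun k _ => by ring

lemma pastroCoeff_Z_eq (q a b : ℝ) (hq : q ≠ 0) (hq1 : ∀ k : ℤ, k ≠ 0 → q ^ k ≠ 1) (ha : a ≠ 0)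
    (hbq : ∀ m : ℤ, b * q ^ m ≠ 1) (habq : ∀ m : ℤ, a⁻¹ * b * q ^ m ≠ 1) (m k : ℕ) :
    ((q ^ k)⁻¹ - b) * pastroCoeff q a b (m + 1) k +
        (q - (q ^ k)⁻¹) * pastroCoeff q a b (m + 1) (k + 1) =
      q ^ (-((m + 1 : ℕ) : ℤ)) * (1 - b * q ^ (m + 1)) * pastroCoeff q a b (m + 1) k +
        b * q * (1 - q ^ (-((m + 1 : ℕ) : ℤ))) * (1 - a * q ^ (((m + 1 : ℕ) : ℤ) - 1)) /
            (a * (1 - b * q ^ (((m + 1 : ℕ) : ℤ) - 1))) * pastroCoeff q a b m k := by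
  have one_sub_ne_zero {y : ℝ} (h : y ≠ 1) : 1 - y ≠ 0 := sub_ne_zero.mpr h.symm
  have hbm : 1 - b * q ^ m ≠ 0 := one_sub_ne_zero (by exact_mod_cast hbq m)
  have hqm : 1 - q * q ^ m ≠ 0 :=
    one_sub_ne_zero (by rw [← pow_succ']; exact_mod_cast hq1 (m + 1) (by omega))
  have hqk : 1 - q ^ k * q ≠ 0 :=
    one_sub_ne_zero (by rw [← pow_succ]; exact_mod_cast hq1 (k + 1) (by omega))
  have hwk : q ^ m * a - q ^ k * b ≠ 0 := fun h =>
    habq (k - m) (by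
      rw [zpow_sub₀ hq, zpow_natCast, zpow_natCast]
      field_simp
      linear_combination -h)
  rw [pastroCoeff_eq_pastroCoeff_succ_mul q a b hq (one_sub_ne_zero (hq1 _ (by omega)))
    (one_sub_ne_zero (habq _)) hbm hqm, pastroCoeff_succ_right,
    show ((m + 1 : ℕ) : ℤ) - 1 = m by push_cast; ring, zpow_natCast,
    show q ^ (-((m + 1 : ℕ) : ℤ)) = (q ^ m * q)⁻¹ by rw [zpow_neg, zpow_natCast, pow_succ],
    show (1 : ℤ) - ((m + 1 : ℕ) : ℤ) = -(m : ℤ) by push_cast; ring, zpow_neg, zpow_natCast]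
  field_simp
  ring

theorem pastro_Z_bidiagonal_general (q a b : ℝ) (hq : q ≠ 0) (hq1 : ∀ k : ℤ, k ≠ 0 → q ^ k ≠ 1)
    (ha : a ≠ 0)
    (hbq : ∀ m : ℤ, b * q ^ m ≠ 1) (habq : ∀ m : ℤ, a⁻¹ * b * q ^ m ≠ 1)
    (n : ℕ) (hn : 0 < n) (x : ℝ) (hx : x ≠ 0) :
    (1 - q * x⁻¹) * pastroP q a b n (q⁻¹ * x) + (q * x⁻¹ - b) * pastroP q a b n x =
      q ^ (-(n : ℤ)) * (1 - b * q ^ n) * pastroP q a b n x +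
        b * q * (1 - q ^ (-(n : ℤ))) * (1 - a * q ^ ((n : ℤ) - 1)) /
            (a * (1 - b * q ^ ((n : ℤ) - 1))) * pastroP q a b (n - 1) x := by
  obtain ⟨m, rfl⟩ : ∃ m, n = m + 1 := ⟨n - 1, by omega⟩
  rw [Nat.add_sub_cancel, pastroP, pastroP,
    Z_sum_eq q b x hq hx _ _ (pastroCoeff_succ_self q a b hq _),
    pastroP_eq_sum_range_add_two q a b hq m, mul_sum, mul_sum, ← sum_add_distrib]
  refine sum_congr rfl fun k _ => ?_
  rw [pastroCoeff_Z_eq q a b hq hq1 ha hbq habq m k]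
  ring

/-- The operator `Z` acts bidiagonally on the Pastro polynomial basis. -/
theorem pastro_Z_bidiagonal (q a b : ℝ) (hq : q ≠ 0) (hq1 : ∀ k : ℤ, k ≠ 0 → q ^ k ≠ 1)
    (ha : a ≠ 0) (hb : b ≠ 0)
    (hbq : ∀ m : ℤ, b * q ^ m ≠ 1) (habq : ∀ m : ℤ, a⁻¹ * b * q ^ m ≠ 1)
    (n : ℕ) (hn : 0 < n) (x : ℝ) (hx : x ≠ 0) :
    (1 - q * x⁻¹) * pastroP q a b n (q⁻¹ * x) + (q * x⁻¹ - b) * pastroP q a b n x =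
      q ^ (-(n : ℤ)) * (1 - b * q ^ n) * pastroP q a b n x +
        b * q * (1 - q ^ (-(n : ℤ))) * (1 - a * q ^ ((n : ℤ) - 1)) /
            (a * (1 - b * q ^ ((n : ℤ) - 1))) * pastroP q a b (n - 1) x :=
  pastro_Z_bidiagonal_general q a b hq hq1 ha hbq habq n hn x hx
end

section
/- The biorthogonal partners of the Pastro polynomials on the q-grid are, up to normalization, Pastro polynomials with transformed parameters: for every positive integer N and every n ∈ {0, 1, ..., N-1}, there exists a nonzero real constant ν_n (independent of s) such that for all s ∈ {0, 1, ..., N-1}, R_n(q^{s+1}; q^{1-N}, b; q) = ν_n P_n(q^{N-s}; q^{1-N}, b^{-1} q^{2-N}; q). -/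
/-- The biorthogonal partner `R_n(x;a,b;q)` of the Pastro polynomials. -/
noncomputable def pastroR (q a b : ℝ) (n : ℕ) (x : ℝ) : ℝ :=
  (qPoch q (q ^ (-(n : ℤ))) n * qPoch q (b * q⁻¹) n /
      (qPoch q (a⁻¹ * b * q ^ (-(n : ℤ))) n * qPoch q q n)) *
    ∑ k ∈ Finset.range (n + 1),
      (qPoch q (q ^ (-(n : ℤ))) k * qPoch q (a * b⁻¹ * q) k /
          (qPoch q (b⁻¹ * q ^ (2 - (n : ℤ))) k * qPoch q q k)) *
        (q ^ 2 / (a * x)) ^ k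
/-!
Both `P_n(x;a,b)` and `R_n(x;a,b)` are constant multiples of a terminating
`₂φ₁(q^{-n}, β; γ; q, z)`: with `(β, γ, z) = (b, a⁻¹bq^{1-n}, x)` for `P_n` and
`(ab⁻¹q, b⁻¹q^{2-n}, q²/(ax))` for `R_n`. Since `a⁻¹(ab⁻¹q)q^{1-n} = b⁻¹q^{2-n}`, the series of
`R_n(x;a,b)` is the one of `P_n(q²/(ax); a, ab⁻¹q)`. For `a = q^{1-N}` one has `ab⁻¹q = b⁻¹q^{2-N}` and
`q²/(aq^{s+1}) = q^{N-s}`; the genericity of `q` and `b` keeps both normalizing constants nonzero.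
-/

lemma qPoch_ne_zero {q z : ℝ} {k : ℕ} (h : ∀ j < k, z * q ^ j ≠ 1) : qPoch q z k ≠ 0 :=
  Finset.prod_ne_zero_iff.mpr fun j hj => sub_ne_zero.mpr (h j (Finset.mem_range.mp hj)).symm

lemma qPoch_mul_zpow_ne_zero {q c : ℝ} (hq : q ≠ 0) (hc : ∀ m : ℤ, c * q ^ m ≠ 1) (m : ℤ)
    (k : ℕ) : qPoch q (c * q ^ m) k ≠ 0 :=
  qPoch_ne_zero fun j _ => by rw [mul_assoc, ← zpow_natCast q j, ← zpow_add₀ hq]; exact hc _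

lemma inv_mul_zpow_ne_one {q c : ℝ} (hc : ∀ m : ℤ, c * q ^ m ≠ 1) (m : ℤ) : c⁻¹ * q ^ m ≠ 1 := by
  intro h
  have hc0 : c ≠ 0 := by rintro rfl; simp at h
  rw [inv_mul_eq_one₀ hc0] at h
  apply hc (-m)
  rw [zpow_neg, ← h, mul_inv_cancel₀ hc0]

lemma qPoch_zpow_ne_zero {q : ℝ} (hq : q ≠ 0) (hq1 : ∀ k : ℤ, k ≠ 0 → q ^ k ≠ 1) {m : ℤ} {k : ℕ}
    (h : ∀ j < k, m + j ≠ 0) : qPoch q (q ^ m) k ≠ 0 :=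
  qPoch_ne_zero fun j hj => by rw [← zpow_natCast q j, ← zpow_add₀ hq]; exact hq1 _ (h j hj)

lemma qPoch_self_ne_zero {q : ℝ} (hq : q ≠ 0) (hq1 : ∀ k : ℤ, k ≠ 0 → q ^ k ≠ 1) (k : ℕ) :
    qPoch q q k ≠ 0 := by
  simpa using qPoch_zpow_ne_zero hq hq1 (m := 1) (k := k) (by omega)

lemma qPoch_zpow_neg_ne_zero {q : ℝ} (hq : q ≠ 0) (hq1 : ∀ k : ℤ, k ≠ 0 → q ^ k ≠ 1) (n : ℕ) :
    qPoch q (q ^ (-(n : ℤ))) n ≠ 0 :=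
  qPoch_zpow_ne_zero hq hq1 (by omega)

/-- The terminating basic hypergeometric series `₂φ₁(q^{-n}, β; γ; q, z)`. -/
noncomputable def qPhi (q β γ : ℝ) (n : ℕ) (z : ℝ) : ℝ :=
  ∑ k ∈ Finset.range (n + 1),
    qPoch q (q ^ (-(n : ℤ))) k * qPoch q β k / (qPoch q γ k * qPoch q q k) * z ^ k

noncomputable def pastroPNorm (q a b : ℝ) (n : ℕ) : ℝ :=
  qPoch q (a⁻¹ * b * q ^ (1 - (n : ℤ))) n * qPoch q q n /
    (qPoch q (q ^ (-(n : ℤ))) n * qPoch q b n)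

noncomputable def pastroRNorm (q a b : ℝ) (n : ℕ) : ℝ :=
  qPoch q (q ^ (-(n : ℤ))) n * qPoch q (b * q⁻¹) n /
    (qPoch q (a⁻¹ * b * q ^ (-(n : ℤ))) n * qPoch q q n)

lemma pastroP_eq_mul_qPhi (q a b : ℝ) (n : ℕ) (x : ℝ) :
    pastroP q a b n x =
      pastroPNorm q a b n * qPhi q b (a⁻¹ * b * q ^ (1 - (n : ℤ))) n x := by
  simp only [pastroP, pastroCoeff, pastroPNorm, qPhi, Finset.mul_sum, mul_assoc]

lemma pastroR_eq_mul_qPhi (q a b : ℝ) (n : ℕ) (x : ℝ) :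
    pastroR q a b n x =
      pastroRNorm q a b n * qPhi q (a * b⁻¹ * q) (b⁻¹ * q ^ (2 - (n : ℤ))) n (q ^ 2 / (a * x)) :=
  rfl

lemma inv_mul_mul_zpow_one_sub {q a : ℝ} (b : ℝ) (n : ℕ) (hq : q ≠ 0) (ha : a ≠ 0) :
    a⁻¹ * (a * b⁻¹ * q) * q ^ (1 - (n : ℤ)) = b⁻¹ * q ^ (2 - (n : ℤ)) := by
  rw [show (2 - n : ℤ) = 1 + (1 - n) by ring, zpow_add₀ hq, zpow_one]
  field_simp

theorem pastroR_eq_div_mul_pastroP {q a : ℝ} (b : ℝ) {n : ℕ} (hq : q ≠ 0) (ha : a ≠ 0)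
    (hP : pastroPNorm q a (a * b⁻¹ * q) n ≠ 0) (x : ℝ) :
    pastroR q a b n x = pastroRNorm q a b n / pastroPNorm q a (a * b⁻¹ * q) n *
      pastroP q a (a * b⁻¹ * q) n (q ^ 2 / (a * x)) := by
  rw [pastroR_eq_mul_qPhi, pastroP_eq_mul_qPhi, inv_mul_mul_zpow_one_sub b n hq ha, ← mul_assoc,
    div_mul_cancel₀ _ hP]

lemma zpow_one_sub_mul_inv_mul {q : ℝ} (b : ℝ) (hq : q ≠ 0) (N : ℕ) :
    q ^ (1 - (N : ℤ)) * b⁻¹ * q = b⁻¹ * q ^ (2 - (N : ℤ)) := by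
  rw [show (2 - N : ℤ) = (1 - N) + 1 by ring, zpow_add₀ hq, zpow_one]; ring

lemma pastroRNorm_grid_ne_zero {q b : ℝ} (hq : q ≠ 0) (hq1 : ∀ k : ℤ, k ≠ 0 → q ^ k ≠ 1)
    (hbq : ∀ m : ℤ, b * q ^ m ≠ 1) (N n : ℕ) :
    pastroRNorm q (q ^ (1 - (N : ℤ))) b n ≠ 0 := by
  have hden : (q ^ (1 - (N : ℤ)))⁻¹ * b * q ^ (-(n : ℤ)) = b * q ^ ((N : ℤ) - 1 - n) := by
    rw [← zpow_neg, mul_comm _ b, mul_assoc, ← zpow_add₀ hq]; ring_nf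
  rw [pastroRNorm, hden, ← zpow_neg_one]
  exact div_ne_zero
    (mul_ne_zero (qPoch_zpow_neg_ne_zero hq hq1 n) (qPoch_mul_zpow_ne_zero hq hbq _ _))
    (mul_ne_zero (qPoch_mul_zpow_ne_zero hq hbq _ _) (qPoch_self_ne_zero hq hq1 n))

lemma pastroPNorm_grid_ne_zero {q b : ℝ} (hq : q ≠ 0) (hq1 : ∀ k : ℤ, k ≠ 0 → q ^ k ≠ 1)
    (hbq : ∀ m : ℤ, b * q ^ m ≠ 1) (N n : ℕ) :
    pastroPNorm q (q ^ (1 - (N : ℤ))) (b⁻¹ * q ^ (2 - (N : ℤ))) n ≠ 0 := by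
  have hb := inv_mul_zpow_ne_one hbq
  rw [pastroPNorm, ← zpow_one_sub_mul_inv_mul b hq N,
    inv_mul_mul_zpow_one_sub b n hq (zpow_ne_zero _ hq), zpow_one_sub_mul_inv_mul b hq N]
  exact div_ne_zero
    (mul_ne_zero (qPoch_mul_zpow_ne_zero hq hb _ _) (qPoch_self_ne_zero hq hq1 n))
    (mul_ne_zero (qPoch_zpow_neg_ne_zero hq hq1 n) (qPoch_mul_zpow_ne_zero hq hb _ _))

theorem pastro_partner_transform_general (q b : ℝ) (hq : q ≠ 0) (hq1 : ∀ k : ℤ, k ≠ 0 → q ^ k ≠ 1)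
    (hbq : ∀ m : ℤ, b * q ^ m ≠ 1)
    (N : ℕ) (n : ℕ) :
    ∃ ν : ℝ, ν ≠ 0 ∧ ∀ s : ℕ, s < N →
      pastroR q (q ^ (1 - (N : ℤ))) b n (q ^ (s + 1)) =
        ν * pastroP q (q ^ (1 - (N : ℤ))) (b⁻¹ * q ^ (2 - (N : ℤ))) n (q ^ ((N : ℤ) - s)) := by
  have hP := pastroPNorm_grid_ne_zero hq hq1 hbq N n
  refine ⟨_, div_ne_zero (pastroRNorm_grid_ne_zero hq hq1 hbq N n) hP, fun s _ => ?_⟩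
  have hgrid : q ^ 2 / (q ^ (1 - (N : ℤ)) * q ^ (s + 1)) = q ^ ((N : ℤ) - s) := by
    rw [← zpow_natCast, ← zpow_natCast, ← zpow_add₀ hq, ← zpow_sub₀ hq]
    congr 1; push_cast; ring
  rw [← zpow_one_sub_mul_inv_mul b hq N] at hP ⊢
  rw [pastroR_eq_div_mul_pastroP b hq (zpow_ne_zero _ hq) hP, hgrid]

/-- On the q-grid, the biorthogonal partners are, up to normalization, Pastro
polynomials with transformed parameters. -/
theorem pastro_partner_transform (q b : ℝ) (hq : q ≠ 0) (hq1 : ∀ k : ℤ, k ≠ 0 → q ^ k ≠ 1)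
    (hb : b ≠ 0) (hbq : ∀ m : ℤ, b * q ^ m ≠ 1)
    (N : ℕ) (hN : 0 < N) (n : ℕ) (hn : n < N) :
    ∃ ν : ℝ, ν ≠ 0 ∧ ∀ s : ℕ, s < N →
      pastroR q (q ^ (1 - (N : ℤ))) b n (q ^ (s + 1)) =
        ν * pastroP q (q ^ (1 - (N : ℤ))) (b⁻¹ * q ^ (2 - (N : ℤ))) n (q ^ ((N : ℤ) - s)) :=
  pastro_partner_transform_general q b hq hq1 hbq N n
end
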